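/- Let n ≥ 1. There exists a constant C > 0 depending only on n with the following property: for every convex body K in ℝ^{n+1} whose support function h is nonnegative on S^n (equivalently, 0 ∈ K), one has (⨍_{S^n} h² dθ)^{1/2} ≤ C · ⨍_{S^n} h dθ. -/

import Mathlib

open MeasureTheory Metric Real
open scoped InnerProductSpace ENNReal Topology

noncomputable section

/-- Euclidean space `ℝ^{n+1}`. -/
abbrev Eu (n : ℕ) : Type := EuclideanSpace ℝ (Fin (n + 1))

/-- The unit sphere `S^n ⊆ ℝ^{n+1}` as a subtype. -/
abbrev Sph (n : ℕ) : Type := Metric.sphere (0 : Eu n) 1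

/-- The spherical Lebesgue (surface) measure on `S^n`. -/
def sphMeas (n : ℕ) : Measure (Sph n) := (volume : Measure (Eu n)).toSphere

/-- The support function of a set `K ⊆ ℝ^{n+1}`. -/
def sfn {n : ℕ} (K : Set (Eu n)) (z : Eu n) : ℝ :=
  sSup ((fun y => ⟪z, y⟫_ℝ) '' K)

/-- The Hessian endomorphism `A(x) = D(∇ h_K)(x)`. -/
def hessA {n : ℕ} (K : Set (Eu n)) (x : Eu n) : Eu n →L[ℝ] Eu n :=
  fderiv ℝ (gradient (sfn K)) x

/-- The rank-one endomorphism `x ⊗ x : v ↦ ⟨v, x⟩ x`. -/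
def tens {n : ℕ} (x : Eu n) : Eu n →L[ℝ] Eu n :=
  (innerSL ℝ x).smulRight x

/-- `det (A(x) + x ⊗ x)`, the reciprocal Gauss curvature `1/𝒦` at `x ∈ S^n`. -/
def rK {n : ℕ} (K : Set (Eu n)) (x : Eu n) : ℝ :=
  LinearMap.det ((hessA K x + tens x : Eu n →L[ℝ] Eu n) : Eu n →ₗ[ℝ] Eu n)

/-- `K` is a smooth, strictly convex body with positive support function. -/
structure IsSmoothConvexBody {n : ℕ} (K : Set (Eu n)) : Prop where
  compact : IsCompact K
  convex : Convex ℝ K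
  interior_nonempty : (interior K).Nonempty
  pos : ∀ x : Sph n, 0 < sfn K x
  smooth : ContDiffOn ℝ (⊤ : ℕ∞) (sfn K) {(0 : Eu n)}ᶜ
  posdef : ∀ x : Sph n, ∀ v : Eu n, v ≠ 0 →
    0 < ⟪(hessA K (x : Eu n) + tens (x : Eu n)) v, v⟫_ℝ

/-- The density `h·det(A + x⊗x)` of the measure `dV` with respect to `dθ`. -/
def dens {n : ℕ} (K : Set (Eu n)) (x : Eu n) : ℝ := sfn K x * rK K x

/-- The centroid-type point `c(K) = (∫ ∇h_K dV)/(∫ dV)`. -/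
def cK {n : ℕ} (K : Set (Eu n)) : Eu n :=
  (∫ x : Sph n, dens K x ∂sphMeas n)⁻¹ •
    ∫ x : Sph n, dens K x • gradient (sfn K) x ∂sphMeas n

/-- The support function of the translated body `K - c(K)`. -/
def tsfn {n : ℕ} (K : Set (Eu n)) (x : Eu n) : ℝ := sfn K x - ⟪x, cK K⟫_ℝ

/-!
If `R` is the largest norm of a point `y₀ ∈ K`, then `h ≤ R` on the sphere, so the `L²`-mean
of `h` is at most `R`. Conversely `h(x) ≥ max ⟨x, y₀⟩ 0` when `h ≥ 0`, and the mean of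
`x ↦ max ⟨x, y₀⟩ 0` is at least `c R`, where `c > 0` is the minimum over unit vectors `u` of
the mean of `x ↦ max ⟨x, u⟩ 0`: this function of `u` is continuous and positive, since every
open hemisphere has positive measure.
-/

section SphereMeasure

variable {E : Type*} [NormedAddCommGroup E] [InnerProductSpace ℝ E] [MeasurableSpace E]
  (ν : Measure (sphere (0 : E) 1))

lemma integral_max_inner_smul {r : ℝ} (hr : 0 ≤ r) (u : E) :
    ∫ x, max ⟪(x : E), r • u⟫_ℝ 0 ∂ν = r * ∫ x, max ⟪(x : E), u⟫_ℝ 0 ∂ν := by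
  rw [← integral_const_mul]
  congr 1 with x
  rw [real_inner_smul_right, mul_max_of_nonneg _ _ hr, mul_zero]

variable [FiniteDimensional ℝ E] [BorelSpace E]

lemma continuous_integral_max_inner [IsFiniteMeasure ν] :
    Continuous fun y : E => ∫ x, max ⟪(x : E), y⟫_ℝ 0 ∂ν := by
  have := continuous_parametric_integral_of_continuous (μ := ν)
    (f := fun (y : E) (x : sphere (0 : E) 1) => max ⟪(x : E), y⟫_ℝ 0) (by fun_prop)
    isCompact_univ
  simpa only [Measure.restrict_univ] using this

lemma integral_max_inner_pos [IsFiniteMeasure ν] [ν.IsOpenPosMeasure] {y : E} (hy : y ≠ 0) :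
    0 < ∫ x, max ⟪(x : E), y⟫_ℝ 0 ∂ν := by
  have hcont : Continuous fun x : sphere (0 : E) 1 => ⟪(x : E), y⟫_ℝ := by fun_prop
  rw [integral_pos_iff_support_of_nonneg (f := fun x : sphere (0 : E) 1 => max ⟪(x : E), y⟫_ℝ 0)
    (fun x => le_max_right _ _)
    ((hcont.max continuous_const).integrable_of_hasCompactSupport (.of_compactSpace _))]
  have hsupp : Function.support (fun x : sphere (0 : E) 1 => max ⟪(x : E), y⟫_ℝ 0) =
      {x : sphere (0 : E) 1 | 0 < ⟪(x : E), y⟫_ℝ} := by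
    ext x
    simp
  rw [hsupp]
  refine (isOpen_lt continuous_const hcont).measure_pos ν ⟨⟨‖y‖⁻¹ • y, ?_⟩, ?_⟩
  · simpa using norm_smul_inv_norm (𝕜 := ℝ) hy
  · have hy' : 0 < ‖y‖ := norm_pos_iff.mpr hy
    simp only [Set.mem_ofPred_eq, real_inner_smul_left, real_inner_self_eq_norm_sq]
    positivity

lemma exists_pos_mul_norm_le_integral_max_inner [IsFiniteMeasure ν] [ν.IsOpenPosMeasure] :
    ∃ c > 0, ∀ y : E, c * ‖y‖ ≤ ∫ x, max ⟪(x : E), y⟫_ℝ 0 ∂ν := by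
  obtain ⟨c, hc, hcu⟩ := (isCompact_sphere (0 : E) 1).exists_forall_le'
    (continuous_integral_max_inner ν).continuousOn
    fun u hu => integral_max_inner_pos ν (ne_zero_of_mem_unit_sphere ⟨u, hu⟩)
  refine ⟨c, hc, fun y => ?_⟩
  rcases eq_or_ne y 0 with rfl | hy
  · simp
  have hy' : 0 < ‖y‖ := norm_pos_iff.mpr hy
  have hu : ‖y‖⁻¹ • y ∈ sphere (0 : E) 1 := by simpa using norm_smul_inv_norm (𝕜 := ℝ) hy
  calc c * ‖y‖ ≤ (∫ x, max ⟪(x : E), ‖y‖⁻¹ • y⟫_ℝ 0 ∂ν) * ‖y‖ := by gcongr; exact hcu _ hu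
    _ = ∫ x, max ⟪(x : E), y⟫_ℝ 0 ∂ν := by
      rw [integral_max_inner_smul ν (inv_nonneg.mpr hy'.le)]
      field_simp

end SphereMeasure

instance (n : ℕ) : IsFiniteMeasure (sphMeas n) :=
  inferInstanceAs (IsFiniteMeasure (volume : Measure (Eu n)).toSphere)

instance (n : ℕ) : (sphMeas n).IsOpenPosMeasure :=
  inferInstanceAs ((volume : Measure (Eu n)).toSphere.IsOpenPosMeasure)

instance (n : ℕ) : NeZero (sphMeas n) := ⟨Measure.toSphere_ne_zero _⟩

lemma sqrt_average_sq_le {α : Type*} [MeasurableSpace α] {μ : Measure α} [IsFiniteMeasure μ]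
    (hμ : μ ≠ 0) {f : α → ℝ} (hf : Integrable (fun x => f x ^ 2) μ) {R : ℝ} (hR : ∀ x, |f x| ≤ R) :
    √(⨍ x, f x ^ 2 ∂μ) ≤ R := by
  obtain ⟨x, hx⟩ := exists_average_le hμ hf
  calc √(⨍ x, f x ^ 2 ∂μ) ≤ √(f x ^ 2) := Real.sqrt_le_sqrt hx
    _ = |f x| := Real.sqrt_sq_eq_abs _
    _ ≤ R := hR x

section SupportFunction

variable {n : ℕ} {K : Set (Eu n)}

lemma continuous_sfn (hK : IsCompact K) : Continuous (sfn K) :=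
  hK.continuous_sSup (f := fun z y : Eu n => ⟪z, y⟫_ℝ) (by fun_prop)

lemma inner_le_sfn (hK : IsCompact K) (x : Eu n) {y : Eu n} (hy : y ∈ K) : ⟪x, y⟫_ℝ ≤ sfn K x :=
  le_csSup (hK.bddAbove_image (by fun_prop)) ⟨y, hy, rfl⟩

lemma sfn_le_of_forall_norm_le (hne : K.Nonempty) {x : Eu n} (hx : ‖x‖ ≤ 1) {R : ℝ}
    (hR : ∀ y ∈ K, ‖y‖ ≤ R) : sfn K x ≤ R := by
  refine csSup_le (hne.image _) (Set.forall_mem_image.2 fun y hy => ?_)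
  calc ⟪x, y⟫_ℝ ≤ ‖x‖ * ‖y‖ := real_inner_le_norm x y
    _ ≤ ‖y‖ := mul_le_of_le_one_left (norm_nonneg y) hx
    _ ≤ R := hR y hy

end SupportFunction

theorem L2_average_le_average_general (n : ℕ) :
    ∃ C : ℝ, 0 < C ∧
      ∀ K : Set (Eu n), IsCompact K → Convex ℝ K → (interior K).Nonempty →
        (∀ x : Sph n, 0 ≤ sfn K (x : Eu n)) →
        Real.sqrt (⨍ x : Sph n, sfn K (x : Eu n) ^ 2 ∂sphMeas n) ≤
          C * ⨍ x : Sph n, sfn K (x : Eu n) ∂sphMeas n := by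
  obtain ⟨c, hc, hcy⟩ := exists_pos_mul_norm_le_integral_max_inner (sphMeas n)
  set M := (sphMeas n).real Set.univ
  have hM : 0 < M := measureReal_univ_pos
  refine ⟨M / c, by positivity, fun K hK _ hint h0 => ?_⟩
  have hne : K.Nonempty := hint.mono interior_subset
  obtain ⟨y₀, hy₀, hmax⟩ := hK.exists_isMaxOn hne continuous_norm.continuousOn
  have hh : Continuous fun x : Sph n => sfn K (x : Eu n) :=
    (continuous_sfn hK).comp continuous_subtype_val
  calc √(⨍ x : Sph n, sfn K (x : Eu n) ^ 2 ∂sphMeas n) ≤ ‖y₀‖ := by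
        refine sqrt_average_sq_le (NeZero.ne _)
          ((hh.pow 2).integrable_of_hasCompactSupport (.of_compactSpace _)) fun x => ?_
        rw [abs_of_nonneg (h0 x)]
        exact sfn_le_of_forall_norm_le hne (by simp) fun y hy => hmax hy
    _ = M / c * (M⁻¹ * (c * ‖y₀‖)) := by field_simp
    _ ≤ M / c * ⨍ x : Sph n, sfn K (x : Eu n) ∂sphMeas n := by
        rw [average_eq, smul_eq_mul]
        gcongr
        refine (hcy y₀).trans (integral_mono ?_
          (hh.integrable_of_hasCompactSupport (.of_compactSpace _))
          fun x => max_le (inner_le_sfn hK _ hy₀) (h0 x))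
        exact (by fun_prop : Continuous fun x : Sph n => max ⟪(x : Eu n), y₀⟫_ℝ 0)
          |>.integrable_of_hasCompactSupport (.of_compactSpace _)

/-- There is `C = C(n) > 0` such that, for every convex body `K` with nonnegative
support function on `S^n`, one has `(⨍ h² dθ)^{1/2} ≤ C ⨍ h dθ`. -/
theorem L2_average_le_average (n : ℕ) (hn : 1 ≤ n) :
    ∃ C : ℝ, 0 < C ∧
      ∀ K : Set (Eu n), IsCompact K → Convex ℝ K → (interior K).Nonempty →
        (∀ x : Sph n, 0 ≤ sfn K (x : Eu n)) →
        Real.sqrt (⨍ x : Sph n, sfn K (x : Eu n) ^ 2 ∂sphMeas n) ≤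
          C * ⨍ x : Sph n, sfn K (x : Eu n) ∂sphMeas n :=
  L2_average_le_average_general n
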